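/- arXiv:2109.11792 — 5 statements merged into one kernel-verified Lean document; each statement's English description precedes it below -/
import Mathlib

section
/- Let X be a subset of a real normed vector space, let f : X → ℝ attain a minimum at x* ∈ X (i.e. f(x*) ≤ f(x) for all x ∈ X), let λ > 0, L ≥ 0, B ≥ 0, let (x_k)_{k≥0} be a sequence in X with f(x_{k+1}) ≤ f(x_k) for all k ≥ 0, and let (z_k)_{k≥0} be a sequence of nonnegative reals with |z_k − z_0| ≤ B for all k ≥ 0. Suppose that with step sizes α_k = 1/(λ(k+2)) the fundamental inequality α_k (f(x_k) − f(x)) ≤ (1 − λ α_k) ‖x_k − x‖² − ‖x_{k+1} − x‖² + λ α_k (z_k − z_{k+1}) + α_k² L²/2 holds for every k ≥ 0 and every x ∈ X. Then for every N ≥ 1, f(x_N) − f(x*) ≤ (λ ‖x_0 − x*‖²)/N + (λ B)/N + (L² log(N+2))/(2 λ N); in particular f(x_k) → f(x*) as k → ∞. -/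
/-!
Evaluating the fundamental inequality at `x = x*` and multiplying it by `λ (k + 2)` gives
`f x_k - f x* ≤ λ (S_k - S_{k+1}) + λ (z_k - z_{k+1}) + L² / (2 λ (k + 2))` with
`S_k = (k + 1) ‖x_k - x*‖²`, because `(k + 2) (1 - 1 / (k + 2)) = k + 1`. Summing over `k < N`
telescopes, the harmonic tail is at most `log (N + 2)`, and since `f x_k` decreases the sum is at
least `N (f x_N - f x*)`.
-/

open Filter Topology

open Finset

lemma sum_range_inv_add_two_le_log (N : ℕ) :
    ∑ k ∈ range N, ((k : ℝ) + 2)⁻¹ ≤ Real.log (N + 1) := by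
  have h := harmonic_le_one_add_log (N + 1)
  rw [harmonic, sum_range_succ'] at h
  push_cast at h
  simp only [add_assoc, one_add_one_eq_two, inv_one] at h
  linarith

lemma le_of_fundamental_ineq_step {lam L a c e d d' w w' : ℝ} (hlam : 0 < lam) (hc : 0 < c)
    (ha : a = 1 / (lam * c))
    (h : a * e ≤ (1 - lam * a) * d - d' + lam * a * (w - w') + a ^ 2 * L ^ 2 / 2) :
    e ≤ lam * ((c - 1) * d - c * d') + lam * (w - w') + L ^ 2 / (2 * lam * c) := by
  subst ha
  calc e = lam * c * (1 / (lam * c) * e) := by field_simp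
    _ ≤ lam * c * ((1 - lam * (1 / (lam * c))) * d - d' + lam * (1 / (lam * c)) * (w - w')
          + (1 / (lam * c)) ^ 2 * L ^ 2 / 2) := by gcongr
    _ = _ := by field_simp

lemma sum_range_le_of_le_telescoping {lam : ℝ} {e S w c : ℕ → ℝ}
    (h : ∀ k, e k ≤ lam * (S k - S (k + 1)) + lam * (w k - w (k + 1)) + c k) (N : ℕ) :
    ∑ k ∈ range N, e k ≤ lam * (S 0 - S N) + lam * (w 0 - w N) + ∑ k ∈ range N, c k := by
  calc ∑ k ∈ range N, e k
      ≤ ∑ k ∈ range N, (lam * (S k - S (k + 1)) + lam * (w k - w (k + 1)) + c k) :=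
        sum_le_sum fun k _ => h k
    _ = _ := by
      rw [sum_add_distrib, sum_add_distrib, ← mul_sum, ← mul_sum, sum_range_sub' S,
        sum_range_sub' w]

theorem le_log_rate_of_fundamental_ineq {e d w α : ℕ → ℝ} {lam L B : ℝ} (hlam : 0 < lam)
    (he : Antitone e) (hd : ∀ k, 0 ≤ d k) (hw : ∀ k, |w k - w 0| ≤ B)
    (hα : ∀ k, α k = 1 / (lam * ((k : ℝ) + 2)))
    (hstep : ∀ k, α k * e k ≤ (1 - lam * α k) * d k - d (k + 1)
      + lam * α k * (w k - w (k + 1)) + α k ^ 2 * L ^ 2 / 2)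
    {N : ℕ} (hN : 1 ≤ N) :
    e N ≤ lam * d 0 / N + lam * B / N + L ^ 2 * Real.log ((N : ℝ) + 2) / (2 * lam * N) := by
  set S : ℕ → ℝ := fun k => ((k : ℝ) + 1) * d k
  have htel : ∀ k, e k ≤ lam * (S k - S (k + 1)) + lam * (w k - w (k + 1))
      + L ^ 2 / (2 * lam) * ((k : ℝ) + 2)⁻¹ := fun k =>
    calc e k ≤ lam * (((k + 2 : ℝ) - 1) * d k - (k + 2) * d (k + 1)) + lam * (w k - w (k + 1))
          + L ^ 2 / (2 * lam * (k + 2)) :=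
          le_of_fundamental_ineq_step hlam (by positivity) (hα k) (hstep k)
      _ = _ := by simp only [S]; push_cast; field_simp; ring
  have hsum := sum_range_le_of_le_telescoping htel N
  rw [← mul_sum] at hsum
  have hN_mul_le : N * e N ≤ ∑ k ∈ range N, e k := by
    simpa using card_nsmul_le_sum (range N) e (e N) fun k hk => he (mem_range.1 hk).le
  have hSN : 0 ≤ lam * S N := mul_nonneg hlam.le (mul_nonneg (by positivity) (hd N))
  have hwN : lam * (w 0 - w N) ≤ lam * B := by
    gcongr
    linarith [(abs_le.1 (hw N)).1]
  have hlog : L ^ 2 / (2 * lam) * ∑ k ∈ range N, ((k : ℝ) + 2)⁻¹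
      ≤ L ^ 2 / (2 * lam) * Real.log ((N : ℝ) + 2) := by
    gcongr
    exact (sum_range_inv_add_two_le_log N).trans
      (Real.log_le_log (by positivity) (by linarith))
  have hNpos : (0 : ℝ) < N := by exact_mod_cast hN
  calc e N = N * e N / N := by field_simp
    _ ≤ (lam * d 0 + lam * B + L ^ 2 / (2 * lam) * Real.log ((N : ℝ) + 2)) / N := by
        have hS0 : S 0 = d 0 := by simp [S]
        rw [hS0] at hsum
        gcongr
        linarith
    _ = _ := by field_simp

lemma tendsto_log_rate (a b c lam : ℝ) :
    Tendsto (fun N : ℕ => a / N + b / N + c * Real.log ((N : ℝ) + 2) / (2 * lam * N))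
      atTop (𝓝 0) := by
  have hlog : Tendsto (fun N : ℕ => Real.log ((N : ℝ) + 2) / N) atTop (𝓝 0) := by
    have := (Real.tendsto_pow_log_div_mul_add_atTop 1 (-2) 1 one_ne_zero).comp
      (tendsto_atTop_add_const_right _ 2 tendsto_natCast_atTop_atTop)
    refine this.congr fun N => ?_
    simp
  have := ((tendsto_const_div_atTop_nhds_zero_nat a).add
    (tendsto_const_div_atTop_nhds_zero_nat b)).add (hlog.const_mul (c / (2 * lam)))
  simp only [add_zero, mul_zero] at this
  refine this.congr fun N => ?_
  rw [div_mul_div_comm]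

theorem mirror_descent_rate_general {E : Type*} [NormedAddCommGroup E] [NormedSpace ℝ E]
    (X : Set E) (f : E → ℝ) (xstar : E) (hxstar : xstar ∈ X)
    (hmin : ∀ y ∈ X, f xstar ≤ f y)
    (lam L B : ℝ) (hlam : 0 < lam)
    (x : ℕ → E) (hxX : ∀ k, x k ∈ X)
    (hmono : ∀ k, f (x (k + 1)) ≤ f (x k))
    (z : ℕ → ℝ) (hzB : ∀ k, |z k - z 0| ≤ B)
    (α : ℕ → ℝ) (hα : ∀ k, α k = 1 / (lam * ((k : ℝ) + 2)))
    (hfund : ∀ k, ∀ y ∈ X,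
      α k * (f (x k) - f y) ≤
        (1 - lam * α k) * ‖x k - y‖ ^ 2 - ‖x (k + 1) - y‖ ^ 2
          + lam * α k * (z k - z (k + 1)) + α k ^ 2 * L ^ 2 / 2) :
    (∀ N : ℕ, 1 ≤ N →
      f (x N) - f xstar ≤
        lam * ‖x 0 - xstar‖ ^ 2 / N + lam * B / N
          + L ^ 2 * Real.log ((N : ℝ) + 2) / (2 * lam * N)) ∧
    Tendsto (fun k => f (x k)) atTop (𝓝 (f xstar)) := by
  have rate : ∀ N : ℕ, 1 ≤ N → f (x N) - f xstar ≤
      lam * ‖x 0 - xstar‖ ^ 2 / N + lam * B / N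
        + L ^ 2 * Real.log ((N : ℝ) + 2) / (2 * lam * N) := fun N hN =>
    le_log_rate_of_fundamental_ineq (e := fun k => f (x k) - f xstar)
      (d := fun k => ‖x k - xstar‖ ^ 2) hlam
      (antitone_nat_of_succ_le fun k => sub_le_sub_right (hmono k) _) (fun _ => by positivity)
      hzB hα (fun k => hfund k xstar hxstar) hN
  refine ⟨rate, ?_⟩
  have hgap : Tendsto (fun k => f (x k) - f xstar) atTop (𝓝 0) :=
    squeeze_zero' (Eventually.of_forall fun k => sub_nonneg.2 (hmin _ (hxX k)))
      ((eventually_ge_atTop 1).mono rate) (tendsto_log_rate _ _ _ _)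
  simpa using hgap.add_const (f xstar)

/-- Mirror-descent fundamental inequality implies an O(log N / N) convergence rate
to the value of a minimizer, and in particular convergence of `f (x k)` to `f x*`. -/
theorem mirror_descent_rate {E : Type*} [NormedAddCommGroup E] [NormedSpace ℝ E]
    (X : Set E) (f : E → ℝ) (xstar : E) (hxstar : xstar ∈ X)
    (hmin : ∀ y ∈ X, f xstar ≤ f y)
    (lam L B : ℝ) (hlam : 0 < lam) (hL : 0 ≤ L) (hB : 0 ≤ B)
    (x : ℕ → E) (hxX : ∀ k, x k ∈ X)
    (hmono : ∀ k, f (x (k + 1)) ≤ f (x k))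
    (z : ℕ → ℝ) (hz : ∀ k, 0 ≤ z k) (hzB : ∀ k, |z k - z 0| ≤ B)
    (α : ℕ → ℝ) (hα : ∀ k, α k = 1 / (lam * ((k : ℝ) + 2)))
    (hfund : ∀ k, ∀ y ∈ X,
      α k * (f (x k) - f y) ≤
        (1 - lam * α k) * ‖x k - y‖ ^ 2 - ‖x (k + 1) - y‖ ^ 2
          + lam * α k * (z k - z (k + 1)) + α k ^ 2 * L ^ 2 / 2) :
    (∀ N : ℕ, 1 ≤ N →
      f (x N) - f xstar ≤
        lam * ‖x 0 - xstar‖ ^ 2 / N + lam * B / N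
          + L ^ 2 * Real.log ((N : ℝ) + 2) / (2 * lam * N)) ∧
    Tendsto (fun k => f (x k)) atTop (𝓝 (f xstar)) :=
  mirror_descent_rate_general X f xstar hxstar hmin lam L B hlam x hxX hmono z hzB α hα hfund
end

section
/- Let X be a subset of a real normed vector space, let f : X → ℝ attain a minimum at x* ∈ X, let λ > 0, L ≥ 0, B ≥ 0, let (x_k)_{k≥0} be a sequence in X with f(x_{k+1}) ≤ f(x_k) for all k ≥ 0 and with x_k → x* in norm, and let (z_k)_{k≥0} be nonnegative reals with |z_k − z_0| ≤ B for all k ≥ 0. Suppose that with step sizes α_k = 1/(λ(k+2)) the fundamental inequality α_k (f(x_k) − f(x)) ≤ (1 − λ α_k) ‖x_k − x‖² − ‖x_{k+1} − x‖² + λ α_k (z_k − z_{k+1}) + α_k² L²/2 holds for every k ≥ 0 and every x ∈ X, and that f(x_k) → f(x*). Then quadratic growth holds at the initial point: λ ‖x* − x_0‖² ≤ f(x_0) − f(x*). -/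
/-!
Take `y = x₀` in the fundamental inequality and multiply by `λ (k + 2)`: the quantity
`u k = λ (k + 1) ‖x k - x₀‖² + λ z k` then satisfies `u (k + 1) ≤ u k + v k` with
`v k = f x₀ - f (x k) + L² / (2 λ (k + 2)) → f x₀ - f x*`. Telescoping bounds
`(n + 1) λ ‖x n - x₀‖²` by `λ B` plus a partial sum of `v`, and the Cesàro means of `v` converge
to `f x₀ - f x*`, so the limit `λ ‖x* - x₀‖²` is at most `f x₀ - f x*`.
-/

open Filter Topology Finset

theorem fundamental_ineq_rescale {lam L t fk fy dk dk' zk zk' : ℝ} (hlam : 0 < lam) (ht : 0 < t)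
    (h : 1 / (lam * t) * (fk - fy) ≤
      (1 - lam * (1 / (lam * t))) * dk - dk' + lam * (1 / (lam * t)) * (zk - zk')
        + (1 / (lam * t)) ^ 2 * L ^ 2 / 2) :
    lam * t * dk' + lam * zk' ≤
      lam * (t - 1) * dk + lam * zk + (fy - fk + L ^ 2 / (2 * lam) / t) := by
  have hlt : 0 < lam * t := mul_pos hlam ht
  have := mul_le_mul_of_nonneg_left h hlt.le
  field_simp at this ⊢
  linarith

theorem le_add_sum_of_succ_le {u v : ℕ → ℝ} (h : ∀ k, u (k + 1) ≤ u k + v k) (n : ℕ) :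
    u n ≤ u 0 + ∑ k ∈ range n, v k := by
  have : u n - u 0 ≤ ∑ k ∈ range n, v k := by
    rw [← sum_range_sub]
    exact sum_le_sum fun k _ => by linarith [h k]
  linarith

theorem le_of_tendsto_of_mul_le_sum {a v : ℕ → ℝ} {a₀ l C : ℝ} (ha : Tendsto a atTop (𝓝 a₀))
    (hv : Tendsto v atTop (𝓝 l)) (hbound : ∀ n : ℕ, ((n : ℝ) + 1) * a n ≤ C + ∑ k ∈ range n, v k) :
    a₀ ≤ l := by
  have hden : Tendsto (fun n : ℕ => (n : ℝ) + 1) atTop atTop :=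
    tendsto_natCast_atTop_atTop.atTop_add tendsto_const_nhds
  have hcesaro : Tendsto (fun n : ℕ => ((n + 1 : ℕ) : ℝ)⁻¹ * ∑ k ∈ range (n + 1), v k) atTop (𝓝 l) :=
    (tendsto_add_atTop_iff_nat 1).2 hv.cesaro
  have hlim : Tendsto (fun n : ℕ => (C - v n) / ((n : ℝ) + 1)
      + ((n + 1 : ℕ) : ℝ)⁻¹ * ∑ k ∈ range (n + 1), v k) atTop (𝓝 l) := by
    simpa using ((tendsto_const_nhds.sub hv).div_atTop hden).add hcesaro
  refine le_of_tendsto_of_tendsto' ha hlim fun n => ?_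
  have hn : (0 : ℝ) < n + 1 := by positivity
  rw [sum_range_succ, Nat.cast_succ, ← div_eq_inv_mul, ← add_div, le_div_iff₀ hn]
  linarith [hbound n]

theorem mirror_descent_quadratic_growth_general {E : Type*} [NormedAddCommGroup E] [NormedSpace ℝ E]
    (X : Set E) (f : E → ℝ) (xstar : E)
    (lam L B : ℝ) (hlam : 0 < lam)
    (x : ℕ → E) (hxX : ∀ k, x k ∈ X)
    (hconv : Tendsto x atTop (𝓝 xstar))
    (z : ℕ → ℝ) (hzB : ∀ k, |z k - z 0| ≤ B)
    (α : ℕ → ℝ) (hα : ∀ k, α k = 1 / (lam * ((k : ℝ) + 2)))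
    (hfund : ∀ k, ∀ y ∈ X,
      α k * (f (x k) - f y) ≤
        (1 - lam * α k) * ‖x k - y‖ ^ 2 - ‖x (k + 1) - y‖ ^ 2
          + lam * α k * (z k - z (k + 1)) + α k ^ 2 * L ^ 2 / 2)
    (hfconv : Tendsto (fun k => f (x k)) atTop (𝓝 (f xstar))) :
    lam * ‖xstar - x 0‖ ^ 2 ≤ f (x 0) - f xstar := by
  set u : ℕ → ℝ := fun n => lam * ((n : ℝ) + 1) * ‖x n - x 0‖ ^ 2 + lam * z n
  set v : ℕ → ℝ := fun k => f (x 0) - f (x k) + L ^ 2 / (2 * lam) / ((k : ℝ) + 2)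
  have hstep (k : ℕ) : u (k + 1) ≤ u k + v k := by
    have h := fundamental_ineq_rescale hlam (by positivity : (0 : ℝ) < k + 2)
      (hα k ▸ hfund k (x 0) (hxX 0))
    simp only [u, v, Nat.cast_succ]
    convert h using 3 <;> ring
  have hv : Tendsto v atTop (𝓝 (f (x 0) - f xstar)) := by
    have hden : Tendsto (fun k : ℕ => (k : ℝ) + 2) atTop atTop :=
      tendsto_natCast_atTop_atTop.atTop_add tendsto_const_nhds
    simpa using (tendsto_const_nhds.sub hfconv).add (tendsto_const_nhds.div_atTop hden)
  have hdist : Tendsto (fun n => lam * ‖x n - x 0‖ ^ 2) atTop (𝓝 (lam * ‖xstar - x 0‖ ^ 2)) :=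
    ((hconv.sub_const (x 0)).norm.pow 2).const_mul lam
  refine le_of_tendsto_of_mul_le_sum (C := lam * B) hdist hv fun n => ?_
  have hu := le_add_sum_of_succ_le hstep n
  have hz : lam * (z 0 - z n) ≤ lam * B :=
    mul_le_mul_of_nonneg_left (by linarith [neg_abs_le (z n - z 0), hzB n]) hlam.le
  simp only [u, Nat.cast_zero, zero_add, mul_one, sub_self, norm_zero] at hu
  linarith

/-- Mirror-descent fundamental inequality implies quadratic growth at the initial point. -/
theorem mirror_descent_quadratic_growth {E : Type*} [NormedAddCommGroup E] [NormedSpace ℝ E]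
    (X : Set E) (f : E → ℝ) (xstar : E) (hxstar : xstar ∈ X)
    (hmin : ∀ y ∈ X, f xstar ≤ f y)
    (lam L B : ℝ) (hlam : 0 < lam) (hL : 0 ≤ L) (hB : 0 ≤ B)
    (x : ℕ → E) (hxX : ∀ k, x k ∈ X)
    (hmono : ∀ k, f (x (k + 1)) ≤ f (x k))
    (hconv : Tendsto x atTop (𝓝 xstar))
    (z : ℕ → ℝ) (hz : ∀ k, 0 ≤ z k) (hzB : ∀ k, |z k - z 0| ≤ B)
    (α : ℕ → ℝ) (hα : ∀ k, α k = 1 / (lam * ((k : ℝ) + 2)))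
    (hfund : ∀ k, ∀ y ∈ X,
      α k * (f (x k) - f y) ≤
        (1 - lam * α k) * ‖x k - y‖ ^ 2 - ‖x (k + 1) - y‖ ^ 2
          + lam * α k * (z k - z (k + 1)) + α k ^ 2 * L ^ 2 / 2)
    (hfconv : Tendsto (fun k => f (x k)) atTop (𝓝 (f xstar))) :
    lam * ‖xstar - x 0‖ ^ 2 ≤ f (x 0) - f xstar :=
  mirror_descent_quadratic_growth_general X f xstar lam L B hlam x hxX hconv z hzB α hα hfund hfconv
end

section
/- Let X be a subset of a real normed vector space, Z a set, z_1,…,z_N ∈ Z, ℓ : X × Z → ℝ, R : X → ℝ, λ > 0, and β ≥ 0. Define the regularized empirical loss L_N(x) = (1/N) Σ_{i=1}^{N} ℓ(x, z_i) + λ R(x) and, for a fixed index j ∈ {1,…,N}, the leave-one-out loss L_N^{\j}(x) = (1/N) Σ_{i≠j} ℓ(x, z_i) + λ R(x). Assume ℓ is β-Lipschitz in its first argument: |ℓ(x, z) − ℓ(x′, z)| ≤ β ‖x − x′‖ for all x, x′ ∈ X and z ∈ Z. Suppose x* minimizes L_N over X, x^{*\j} minimizes L_N^{\j} over X, and the quadratic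 growth condition λ ‖x* − x‖² ≤ L_N(x) − L_N(x*) holds for all x ∈ X. Then ‖x* − x^{*\j}‖ ≤ β/(λ N). -/
/-!
Splitting off the `j`-th sample writes `L_N = L_N^{\j} + ℓ(·, z_j) / N`. Comparing the two
minimizers, quadratic growth and the minimality of `x^{*\j}` for `L_N^{\j}` give
`λ d² ≤ L_N(x^{*\j}) - L_N(x^*) ≤ (ℓ(x^{*\j}, z_j) - ℓ(x^*, z_j)) / N ≤ β d / N` with
`d = ‖x^* - x^{*\j}‖`, and dividing by `λ d` gives the bound.
-/

theorem le_div_of_mul_sq_le_mul {a b d : ℝ} (ha : 0 < a) (hb : 0 ≤ b) (hd : 0 ≤ d)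
    (h : a * d ^ 2 ≤ b * d) : d ≤ b / a := by
  rcases hd.eq_or_lt with rfl | hd
  · positivity
  · rw [le_div_iff₀ ha]
    nlinarith

theorem dist_le_div_of_quadratic_growth_add {α : Type*} [PseudoMetricSpace α]
    {G h : α → ℝ} {X : Set α} {lam L : ℝ} {x₀ x₁ : α} (hlam : 0 < lam) (hL : 0 ≤ L)
    (hlip : ∀ x ∈ X, ∀ y ∈ X, |h x - h y| ≤ L * dist x y)
    (hx₀ : x₀ ∈ X) (hx₁ : x₁ ∈ X) (hmin : IsMinOn G X x₁)
    (hqg : ∀ x ∈ X, lam * dist x₀ x ^ 2 ≤ (G x + h x) - (G x₀ + h x₀)) :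
    dist x₀ x₁ ≤ L / lam := by
  refine le_div_of_mul_sq_le_mul hlam hL dist_nonneg ?_
  have hG : G x₁ ≤ G x₀ := hmin hx₀
  have hh : h x₁ - h x₀ ≤ L * dist x₀ x₁ := by
    rw [dist_comm]
    exact (abs_le.mp (hlip x₁ hx₁ x₀ hx₀)).2
  linarith [hqg x₁ hx₁]

theorem regularized_erm_minimizer_stability_general {E : Type*} [NormedAddCommGroup E]
    [NormedSpace ℝ E] {Z : Type*} (X : Set E) (N : ℕ) (zs : Fin N → Z)
    (ℓ : E → Z → ℝ) (R : E → ℝ) (lam β : ℝ) (hlam : 0 < lam) (hβ : 0 ≤ β)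
    (j : Fin N) (LN LNj : E → ℝ)
    (hLN : ∀ x, LN x = (1 / (N : ℝ)) * ∑ i, ℓ x (zs i) + lam * R x)
    (hLNj : ∀ x, LNj x =
      (1 / (N : ℝ)) * ∑ i ∈ Finset.univ.erase j, ℓ x (zs i) + lam * R x)
    (hlip : ∀ zz : Z, ∀ x ∈ X, ∀ x' ∈ X, |ℓ x zz - ℓ x' zz| ≤ β * ‖x - x'‖)
    (xstar : E) (hxstar : xstar ∈ X)
    (xj : E) (hxj : xj ∈ X) (hxjmin : ∀ x ∈ X, LNj xj ≤ LNj x)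
    (hqg : ∀ x ∈ X, lam * ‖xstar - x‖ ^ 2 ≤ LN x - LN xstar) :
    ‖xstar - xj‖ ≤ β / (lam * N) := by
  have hsplit : ∀ x, LN x = LNj x + 1 / (N : ℝ) * ℓ x (zs j) := fun x => by
    rw [hLN, hLNj, ← Finset.sum_erase_add _ _ (Finset.mem_univ j)]
    ring
  have hlipj : ∀ x ∈ X, ∀ y ∈ X,
      |1 / (N : ℝ) * ℓ x (zs j) - 1 / (N : ℝ) * ℓ y (zs j)| ≤ β / N * dist x y := by
    intro x hx y hy
    calc |1 / (N : ℝ) * ℓ x (zs j) - 1 / (N : ℝ) * ℓ y (zs j)|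
        = 1 / (N : ℝ) * |ℓ x (zs j) - ℓ y (zs j)| := by
          rw [← mul_sub, abs_mul, abs_of_nonneg (by positivity)]
      _ ≤ 1 / (N : ℝ) * (β * ‖x - y‖) := by gcongr; exact hlip _ x hx y hy
      _ = β / N * dist x y := by rw [dist_eq_norm]; ring
  have hbound := dist_le_div_of_quadratic_growth_add hlam (by positivity) hlipj hxstar hxj
    hxjmin (fun x hx => by simpa only [← hsplit, dist_eq_norm] using hqg x hx)
  rw [dist_eq_norm] at hbound
  rwa [div_div, mul_comm] at hbound

/-- Stability of regularized ERM under quadratic growth: the minimizers of the full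
and leave-one-out regularized empirical losses are at distance at most `β / (λ N)`. -/
theorem regularized_erm_minimizer_stability {E : Type*} [NormedAddCommGroup E]
    [NormedSpace ℝ E] {Z : Type*} (X : Set E) (N : ℕ) (hN : 1 ≤ N) (zs : Fin N → Z)
    (ℓ : E → Z → ℝ) (R : E → ℝ) (lam β : ℝ) (hlam : 0 < lam) (hβ : 0 ≤ β)
    (j : Fin N) (LN LNj : E → ℝ)
    (hLN : ∀ x, LN x = (1 / (N : ℝ)) * ∑ i, ℓ x (zs i) + lam * R x)
    (hLNj : ∀ x, LNj x =
      (1 / (N : ℝ)) * ∑ i ∈ Finset.univ.erase j, ℓ x (zs i) + lam * R x)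
    (hlip : ∀ zz : Z, ∀ x ∈ X, ∀ x' ∈ X, |ℓ x zz - ℓ x' zz| ≤ β * ‖x - x'‖)
    (xstar : E) (hxstar : xstar ∈ X) (hxstarmin : ∀ x ∈ X, LN xstar ≤ LN x)
    (xj : E) (hxj : xj ∈ X) (hxjmin : ∀ x ∈ X, LNj xj ≤ LNj x)
    (hqg : ∀ x ∈ X, lam * ‖xstar - x‖ ^ 2 ≤ LN x - LN xstar) :
    ‖xstar - xj‖ ≤ β / (lam * N) :=
  regularized_erm_minimizer_stability_general X N zs ℓ R lam β hlam hβ j LN LNj hLN hLNj hlip xstar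
    hxstar xj hxj hxjmin hqg
end

section
/- Let X be a subset of a real normed vector space, Z a set, z_1,…,z_N ∈ Z, ℓ : X × Z → ℝ, R : X → ℝ, λ > 0, and β ≥ 0. Define L_N(x) = (1/N) Σ_{i=1}^{N} ℓ(x, z_i) + λ R(x) and, for a fixed j ∈ {1,…,N}, L_N^{\j}(x) = (1/N) Σ_{i≠j} ℓ(x, z_i) + λ R(x). Assume ℓ is β-Lipschitz in its first argument: |ℓ(x, z) − ℓ(x′, z)| ≤ β ‖x − x′‖ for all x, x′ ∈ X and z ∈ Z. Suppose x* minimizes L_N over X and x^{*\j} minimizes L_N^{\j} over X. Then L_N(x^{*\j}) − L_N(x*) ≤ (ℓ(x^{*\j}, z_j) − ℓ(x*, z_j))/N ≤ β ‖x* − x^{*\j}‖ / N. -/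
/-! Writing `L_N = L_N^{\j} + ℓ(·, z_j) / N`, the minimality of `x^{*\j}` for `L_N^{\j}` bounds the
`L_N`-gap by the gap of the perturbation `ℓ(·, z_j) / N` alone; the Lipschitz bound finishes. -/

theorem IsMinOn.add_sub_add_le {α β : Type*} [AddCommGroup β] [PartialOrder β]
    [IsOrderedAddMonoid β] {G h : α → β} {s : Set α} {y x : α}
    (hy : IsMinOn G s y) (hx : x ∈ s) :
    G y + h y - (G x + h x) ≤ h y - h x := by
  rw [add_sub_add_comm]
  exact add_le_of_nonpos_left (sub_nonpos.2 (isMinOn_iff.1 hy x hx))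

theorem regularized_erm_loss_gap_general {E : Type*} [NormedAddCommGroup E]
    [NormedSpace ℝ E] {Z : Type*} (X : Set E) (N : ℕ) (zs : Fin N → Z)
    (ℓ : E → Z → ℝ) (R : E → ℝ) (lam β : ℝ)
    (j : Fin N) (LN LNj : E → ℝ)
    (hLN : ∀ x, LN x = (1 / (N : ℝ)) * ∑ i, ℓ x (zs i) + lam * R x)
    (hLNj : ∀ x, LNj x =
      (1 / (N : ℝ)) * ∑ i ∈ Finset.univ.erase j, ℓ x (zs i) + lam * R x)
    (hlip : ∀ zz : Z, ∀ x ∈ X, ∀ x' ∈ X, |ℓ x zz - ℓ x' zz| ≤ β * ‖x - x'‖)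
    (xstar : E) (hxstar : xstar ∈ X)
    (xj : E) (hxj : xj ∈ X) (hxjmin : ∀ x ∈ X, LNj xj ≤ LNj x) :
    LN xj - LN xstar ≤ (ℓ xj (zs j) - ℓ xstar (zs j)) / N ∧
      (ℓ xj (zs j) - ℓ xstar (zs j)) / N ≤ β * ‖xstar - xj‖ / N := by
  have hsplit : ∀ x, LN x = LNj x + ℓ x (zs j) / N := fun x => by
    rw [hLN, hLNj, ← Finset.add_sum_erase _ _ (Finset.mem_univ j)]
    ring
  refine ⟨?_, ?_⟩
  · simpa only [hsplit, sub_div] using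
      (isMinOn_iff.2 hxjmin).add_sub_add_le (h := fun x => ℓ x (zs j) / N) hxstar
  · have hgap := (le_abs_self _).trans (hlip (zs j) xj hxj xstar hxstar)
    rw [norm_sub_rev] at hgap
    gcongr

/-- The loss-difference bound for regularized ERM: the gap of the full empirical loss
between the leave-one-out minimizer and the full minimizer is controlled by the
loss difference on the removed sample, which is controlled by the Lipschitz property. -/
theorem regularized_erm_loss_gap {E : Type*} [NormedAddCommGroup E]
    [NormedSpace ℝ E] {Z : Type*} (X : Set E) (N : ℕ) (hN : 1 ≤ N) (zs : Fin N → Z)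
    (ℓ : E → Z → ℝ) (R : E → ℝ) (lam β : ℝ) (hlam : 0 < lam) (hβ : 0 ≤ β)
    (j : Fin N) (LN LNj : E → ℝ)
    (hLN : ∀ x, LN x = (1 / (N : ℝ)) * ∑ i, ℓ x (zs i) + lam * R x)
    (hLNj : ∀ x, LNj x =
      (1 / (N : ℝ)) * ∑ i ∈ Finset.univ.erase j, ℓ x (zs i) + lam * R x)
    (hlip : ∀ zz : Z, ∀ x ∈ X, ∀ x' ∈ X, |ℓ x zz - ℓ x' zz| ≤ β * ‖x - x'‖)
    (xstar : E) (hxstar : xstar ∈ X) (hxstarmin : ∀ x ∈ X, LN xstar ≤ LN x)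
    (xj : E) (hxj : xj ∈ X) (hxjmin : ∀ x ∈ X, LNj xj ≤ LNj x) :
    LN xj - LN xstar ≤ (ℓ xj (zs j) - ℓ xstar (zs j)) / N ∧
      (ℓ xj (zs j) - ℓ xstar (zs j)) / N ≤ β * ‖xstar - xj‖ / N :=
  regularized_erm_loss_gap_general X N zs ℓ R lam β j LN LNj hLN hLNj hlip xstar hxstar xj hxj
    hxjmin
end

section
/- Let X be a subset of a real normed vector space, let f : X → ℝ, let λ > 0, L ≥ 0, B ≥ 0, let (x_k)_{k≥0} be a sequence in X with f(x_{k+1}) ≤ f(x_k) for all k ≥ 0, and let (z_k)_{k≥0} be nonnegative reals with |z_k − z_0| ≤ B for all k ≥ 0. Suppose that with step sizes α_k = 1/(λ(k+2)) the fundamental inequality α_k (f(x_k) − f(x)) ≤ (1 − λ α_k) ‖x_k − x‖² − ‖x_{k+1} − x‖² + λ α_k (z_k − z_{k+1}) + α_k² L²/2 holds for every k ≥ 0 and every x ∈ X. Then for every N ≥ 1, f(x_N) − f(x_0) ≤ − λ · ((N+2)/N) · ‖x_{N+1} − x_0‖² + (λ B)/N + (L² log(N+2))/(2 λ N). -/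
private theorem harm_log' (n : ℕ) :
    ∑ k ∈ Finset.range n, 1 / ((k : ℝ) + 2) ≤ Real.log ((n : ℝ) + 1) := by
  induction n with
  | zero => simp
  | succ n ih =>
    rw [Finset.sum_range_succ]
    have h1 : (0:ℝ) < (n:ℝ) + 1 := by positivity
    have h2 : (0:ℝ) < (n:ℝ) + 2 := by positivity
    have hlog : Real.log (((n:ℝ)+1)/((n:ℝ)+2)) ≤ ((n:ℝ)+1)/((n:ℝ)+2) - 1 :=
      Real.log_le_sub_one_of_pos (by positivity)
    rw [Real.log_div h1.ne' h2.ne'] at hlog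
    have key : 1 / ((n:ℝ) + 2) ≤ Real.log ((n:ℝ)+2) - Real.log ((n:ℝ)+1) := by
      have h3 : ((n:ℝ)+1)/((n:ℝ)+2) - 1 = -(1/((n:ℝ)+2)) := by
        field_simp
        norm_num
      rw [h3] at hlog; linarith
    have h4 : ((n:ℕ):ℝ) + 1 + 1 = (n:ℝ) + 2 := by ring
    push_cast
    rw [h4]
    linarith [ih]



/-- Key intermediate step towards quadratic growth: taking `x = x₀` in the telescoped
mirror-descent inequality and using monotonicity of `f (x k)`. -/
theorem mirror_descent_initial_point_bound {E : Type*} [NormedAddCommGroup E]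
    [NormedSpace ℝ E] (X : Set E) (f : E → ℝ)
    (lam L B : ℝ) (hlam : 0 < lam) (hL : 0 ≤ L) (hB : 0 ≤ B)
    (x : ℕ → E) (hxX : ∀ k, x k ∈ X)
    (hmono : ∀ k, f (x (k + 1)) ≤ f (x k))
    (z : ℕ → ℝ) (hz : ∀ k, 0 ≤ z k) (hzB : ∀ k, |z k - z 0| ≤ B)
    (α : ℕ → ℝ) (hα : ∀ k, α k = 1 / (lam * ((k : ℝ) + 2)))
    (hfund : ∀ k, ∀ y ∈ X,
      α k * (f (x k) - f y) ≤
        (1 - lam * α k) * ‖x k - y‖ ^ 2 - ‖x (k + 1) - y‖ ^ 2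
          + lam * α k * (z k - z (k + 1)) + α k ^ 2 * L ^ 2 / 2) :
    ∀ N : ℕ, 1 ≤ N →
      f (x N) - f (x 0) ≤
        -lam * (((N : ℝ) + 2) / N) * ‖x (N + 1) - x 0‖ ^ 2
          + lam * B / N + L ^ 2 * Real.log ((N : ℝ) + 2) / (2 * lam * N) := by
  intro N hN
  set a : ℕ → ℝ := fun k => ‖x k - x 0‖ ^ 2 with ha
  -- per-step scaled inequality
  have step : ∀ k : ℕ, f (x k) - f (x 0) ≤
      lam * (((k:ℝ)+1) * a k - ((k:ℝ)+2) * a (k+1)) + lam * (z k - z (k+1))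
        + L ^ 2 / (2 * lam) * (1 / ((k:ℝ)+2)) := by
    intro k
    have h := hfund k (x 0) (hxX 0)
    rw [hα] at h
    have hc : (0:ℝ) < lam * ((k:ℝ)+2) := by positivity
    have h2 := mul_le_mul_of_nonneg_left h hc.le
    have e1 : lam * ((k:ℝ)+2) * (1 / (lam * ((k:ℝ)+2)) * (f (x k) - f (x 0)))
        = f (x k) - f (x 0) := by field_simp
    have e2 : lam * ((k:ℝ)+2) *
        ((1 - lam * (1 / (lam * ((k:ℝ)+2)))) * ‖x k - x 0‖ ^ 2 - ‖x (k+1) - x 0‖ ^ 2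
          + lam * (1 / (lam * ((k:ℝ)+2))) * (z k - z (k+1))
          + (1 / (lam * ((k:ℝ)+2))) ^ 2 * L ^ 2 / 2)
        = lam * (((k:ℝ)+1) * a k - ((k:ℝ)+2) * a (k+1)) + lam * (z k - z (k+1))
          + L ^ 2 / (2 * lam) * (1 / ((k:ℝ)+2)) := by
      simp only [ha]
      field_simp
      ring
    rw [e1, e2] at h2
    exact h2
  -- telescoped sum
  have tele : ∀ n : ℕ, ∑ k ∈ Finset.range (n+1), (f (x k) - f (x 0)) ≤
      lam * (1 * a 0 - ((n:ℝ)+2) * a (n+1)) + lam * (z 0 - z (n+1))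
        + L ^ 2 / (2 * lam) * ∑ k ∈ Finset.range (n+1), 1 / ((k:ℝ)+2) := by
    intro n
    induction n with
    | zero =>
      simpa using step 0
    | succ n ih =>
      rw [Finset.sum_range_succ, Finset.sum_range_succ (f := fun k => 1 / ((k:ℝ)+2))]
      have := step (n+1)
      push_cast at this ⊢
      nlinarith [this, ih]
  -- monotonicity lower bound on the sum
  have hant : Antitone (fun k => f (x k)) := antitone_nat_of_succ_le hmono
  have hlow : (N:ℝ) * (f (x N) - f (x 0)) ≤ ∑ k ∈ Finset.range (N+1), (f (x k) - f (x 0)) := by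
    rw [Finset.sum_range_succ']
    have h0 : f (x 0) - f (x 0) = 0 := by ring
    rw [h0, add_zero]
    calc (N:ℝ) * (f (x N) - f (x 0))
        = ∑ _k ∈ Finset.range N, (f (x N) - f (x 0)) := by
          rw [Finset.sum_const, nsmul_eq_mul, Finset.card_range]
      _ ≤ ∑ k ∈ Finset.range N, (f (x (k+1)) - f (x 0)) := by
          apply Finset.sum_le_sum
          intro i hi
          have : f (x N) ≤ f (x (i+1)) := hant (Finset.mem_range.mp hi)
          linarith
  -- combine
  have hzb : z 0 - z (N+1) ≤ B := by
    have := hzB (N+1)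
    have := abs_le.mp (hzB (N+1))
    linarith [this.1]
  have hlog : ∑ k ∈ Finset.range (N+1), 1 / ((k:ℝ)+2) ≤ Real.log ((N:ℝ)+2) := by
    have := harm_log' (N+1)
    push_cast at this
    have e : ((N:ℝ)+1)+1 = (N:ℝ)+2 := by ring
    rwa [e] at this
  have ha0 : a 0 = 0 := by simp [ha]
  have hLl : (0:ℝ) ≤ L ^ 2 / (2 * lam) := by positivity
  have hmain : (N:ℝ) * (f (x N) - f (x 0)) ≤
      -lam * (((N:ℝ)+2) * a (N+1)) + lam * B + L ^ 2 / (2 * lam) * Real.log ((N:ℝ)+2) := by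
    have h1 := le_trans hlow (tele N)
    rw [ha0] at h1
    nlinarith [mul_le_mul_of_nonneg_left hlog hLl, mul_le_mul_of_nonneg_left hzb hlam.le]
  have hNpos : (0:ℝ) < (N:ℝ) := by exact_mod_cast hN
  rw [show -lam * (((N : ℝ) + 2) / N) * ‖x (N + 1) - x 0‖ ^ 2
          + lam * B / N + L ^ 2 * Real.log ((N : ℝ) + 2) / (2 * lam * N)
      = (-lam * (((N:ℝ)+2) * a (N+1)) + lam * B + L ^ 2 / (2 * lam) * Real.log ((N:ℝ)+2)) / N
      from by simp only [ha]; field_simp]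
  rw [le_div_iff₀ hNpos]
  linarith [hmain]
end
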